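/- arXiv:2602.12801 — 3 statements merged into one kernel-verified Lean document; each statement's English description precedes it below -/
import Mathlib

section
/- Let A = {ξ_0, …, ξ_{m−1}} be m distinct points on the torus ℝ/ℤ and δ ∈ (0,1) with δ ≠ ξ_i − ξ_j (mod 1) for all i, j. Then the intervals of length δ are balanced with respect to A (i.e., there is an integer c such that every half-open interval of length δ on the torus contains either c or c+1 points of A) if and only if the map f_left : {0,…,m−1} → {0,…,m−1}, sending ℓ to the index j minimizing the (mod 1) distance ξ_ℓ + δ − ξ_j measured going leftward, is a bijection. -/
/-- The half-open intervals of length `δ` on the torus `ℝ/ℤ` are balanced with respect to the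
points `ξ 0, …, ξ (m-1)`: there is a `c` such that every interval `[x, x+δ)` (mod 1) contains
either `c` or `c + 1` of the points. A point `ξ i` lies in `[x, x+δ)` mod 1 iff
`Int.fract (ξ i - x) < δ`. -/
def BalancedIntervals (m : ℕ) (ξ : Fin m → ℝ) (δ : ℝ) : Prop :=
  ∃ c : ℕ, ∀ x : ℝ,
    Nat.card {i : Fin m // Int.fract (ξ i - x) < δ} = c ∨
    Nat.card {i : Fin m // Int.fract (ξ i - x) < δ} = c + 1

/-! Lift the points to `ℝ`: sorting the fractional parts and repeating them with period one gives
a strictly increasing enumeration `t : ℤ → ℝ` with `t (n + m) = t n + 1`. An interval `[x, x + δ)`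
then contains `indexAbove t (x + δ) - indexAbove t x` points, where `indexAbove t x` is the least
`n` with `x ≤ t n`, and `f_left` lifts to `g n := indexAbove t (t n + δ) - 1`, the index of the last
point before `t n + δ`. Both balancedness and bijectivity of `f_left` amount to `g` being strictly
increasing: a repeated value of `g` produces two windows whose counts differ by two, resp. a
collision of `f_left` between neighbours. Conversely a strictly increasing `g` with
`g (n + m) = g n + m` is `n ↦ n + g 0`, so every window holds `g 0` or `g 0 + 1` points and
`f_left` is a rotation of the cyclic order. -/

open Function

namespace TorusBalance

lemma eq_add_apply_zero_of_strictMono {m : ℕ} (hm : 0 < m) {g : ℤ → ℤ} (hg : StrictMono g)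
    (hper : ∀ n, g (n + m) = g n + m) (n : ℤ) : g n = n + g 0 := by
  -- `g n - n` is monotone and `m`-periodic, hence constant.
  have hmono : Monotone fun k => g k - k :=
    monotone_int_of_le_succ fun k => by have := hg (lt_add_one k); omega
  have hstep : ∀ k, g (k + 1) = g k + 1 := fun k => by
    have h1 : g k - k ≤ g (k + 1) - (k + 1) := hmono (by omega)
    have h2 : g (k + 1) - (k + 1) ≤ g (k + m) - (k + m) := hmono (by omega)
    have := hper k
    omega
  induction n using Int.induction_on with
  | zero => simp
  | succ k ih => rw [hstep, ih]; ring
  | pred k ih => have := hstep (-k - 1); simp only [sub_add_cancel] at this; omega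

section Lift

variable {m : ℕ} {t : ℤ → ℝ}

lemma apply_add_mul (hper : ∀ n, t (n + m) = t n + 1) (n z : ℤ) : t (n + z * m) = t n + z := by
  induction z using Int.induction_on with
  | zero => simp
  | succ k ih => rw [add_mul, one_mul, ← add_assoc, hper, ih]; push_cast; ring
  | pred k ih =>
    have := hper (n + (-k - 1) * m)
    rw [add_assoc, ← add_one_mul, sub_add_cancel, ih] at this
    push_cast at this ⊢; linarith

lemma apply_mul (hper : ∀ n, t (n + m) = t n + 1) (z : ℤ) : t (z * m) = t 0 + z := by
  rw [← apply_add_mul hper, zero_add]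

noncomputable def indexAbove (t : ℤ → ℝ) (x : ℝ) : ℤ := sInf {n | x ≤ t n}

lemma gc_indexAbove (ht : StrictMono t) (hper : ∀ n, t (n + m) = t n + 1) :
    GaloisConnection (indexAbove t) t := by
  intro x n
  have hne : {n | x ≤ t n}.Nonempty :=
    ⟨⌈x - t 0⌉ * m, by
      simp only [Set.mem_ofPred_eq, apply_mul hper]
      linarith [Int.le_ceil (x - t 0)]⟩
  have hbdd : BddBelow {n | x ≤ t n} := by
    refine ⟨(⌊x - t 0⌋ - 1) * m, fun k (hk : x ≤ t k) => ht.le_iff_le.1 ?_⟩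
    rw [apply_mul hper]
    push_cast
    linarith [Int.floor_le (x - t 0)]
  exact ⟨fun h => le_trans (Int.csInf_mem hne hbdd) (ht.monotone h), fun h => csInf_le hbdd h⟩

variable (ht : StrictMono t) (hper : ∀ n, t (n + m) = t n + 1)
include ht hper

lemma indexAbove_le_iff {x : ℝ} {n : ℤ} : indexAbove t x ≤ n ↔ x ≤ t n :=
  gc_indexAbove ht hper x n

lemma lt_indexAbove_iff {x : ℝ} {n : ℤ} : n < indexAbove t x ↔ t n < x :=
  (gc_indexAbove ht hper).lt_iff_lt

lemma indexAbove_apply (n : ℤ) : indexAbove t (t n) = n :=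
  eq_of_forall_ge_iff fun k => by rw [indexAbove_le_iff ht hper, ht.le_iff_le]

lemma indexAbove_add_one (x : ℝ) : indexAbove t (x + 1) = indexAbove t x + m :=
  eq_of_forall_ge_iff fun k => by
    rw [indexAbove_le_iff ht hper, ← sub_add_cancel k m, hper, add_le_add_iff_right,
      ← indexAbove_le_iff ht hper, le_sub_iff_add_le, sub_add_cancel]

omit ht hper in
noncomputable def leftIndex (t : ℤ → ℝ) (δ : ℝ) (n : ℤ) : ℤ := indexAbove t (t n + δ) - 1

variable {δ : ℝ}

lemma apply_leftIndex_lt (n : ℤ) : t (leftIndex t δ n) < t n + δ := by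
  rw [← lt_indexAbove_iff ht hper, leftIndex]
  omega

lemma lt_apply_leftIndex_add_one (hδ : ∀ k n, t k ≠ t n + δ) (n : ℤ) :
    t n + δ < t (leftIndex t δ n + 1) := by
  rw [leftIndex, sub_add_cancel]
  exact ((indexAbove_le_iff ht hper).1 le_rfl).lt_of_ne (hδ _ n).symm

lemma le_leftIndex (hδ0 : 0 < δ) (n : ℤ) : n ≤ leftIndex t δ n := by
  have := (lt_indexAbove_iff ht hper).2 (lt_add_of_pos_right (t n) hδ0)
  rw [leftIndex]
  omega

lemma leftIndex_mono : Monotone (leftIndex t δ) := fun _ _ hab =>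
  Int.sub_le_sub_right ((gc_indexAbove ht hper).monotone_l
    (add_le_add_left (ht.monotone hab) δ)) 1

lemma leftIndex_add (n : ℤ) : leftIndex t δ (n + m) = leftIndex t δ n + m := by
  rw [leftIndex, leftIndex, hper, add_right_comm, indexAbove_add_one ht hper]
  ring

lemma exists_count_iff_strictMono_leftIndex [NeZero m] (hδ0 : 0 < δ) (hδ : ∀ k n, t k ≠ t n + δ) :
    (∃ c : ℕ, ∀ x, (indexAbove t (x + δ) - indexAbove t x).toNat = c ∨
      (indexAbove t (x + δ) - indexAbove t x).toNat = c + 1) ↔ StrictMono (leftIndex t δ) := by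
  constructor
  · rintro ⟨c, hc⟩
    refine strictMono_int_of_lt_succ fun n => (leftIndex_mono ht hper (lt_add_one n).le).lt_of_ne ?_
    intro hstuck
    -- With no point between `t n + δ` and `t (n + 1) + δ`, the window starting at `t n` holds
    -- two points more than the window ending just before the next point `t (leftIndex n + 1)`.
    obtain ⟨k, hk⟩ : ∃ k, leftIndex t δ n = k := ⟨_, rfl⟩
    have hk' : indexAbove t (t n + δ) = k + 1 := by rw [← hk, leftIndex]; ring
    have hlate : n + 1 < indexAbove t (t (k + 1) - δ) := by
      rw [lt_indexAbove_iff ht hper]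
      have := lt_apply_leftIndex_add_one ht hper hδ (n + 1)
      rw [← hstuck, hk] at this
      linarith
    have h1 := hc (t n)
    have h2 := hc (t (k + 1) - δ)
    rw [indexAbove_apply ht hper, hk'] at h1
    rw [sub_add_cancel, indexAbove_apply ht hper] at h2
    have := le_leftIndex ht hper hδ0 (n + 1)
    rw [← hstuck, hk] at this
    omega
  · intro hg
    have hlin := eq_add_apply_zero_of_strictMono (NeZero.pos m) hg (leftIndex_add ht hper)
    refine ⟨(leftIndex t δ 0).toNat, fun x => ?_⟩
    set a := indexAbove t x
    have hlow : a - 1 + leftIndex t δ 0 < indexAbove t (x + δ) := by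
      rw [lt_indexAbove_iff ht hper, ← hlin]
      have := (lt_indexAbove_iff ht hper).1 (sub_one_lt a)
      linarith [apply_leftIndex_lt ht hper (δ := δ) (a - 1)]
    have hhigh : indexAbove t (x + δ) ≤ a + leftIndex t δ 0 + 1 := by
      rw [indexAbove_le_iff ht hper, ← hlin]
      have := (indexAbove_le_iff ht hper).1 (le_refl a)
      linarith [lt_apply_leftIndex_add_one ht hper hδ a]
    have := le_leftIndex ht hper hδ0 0
    omega

end Lift

section Enumeration

variable {m : ℕ} [NeZero m] (ξ : Fin m → ℝ)

noncomputable def sortedFract (r : Fin m) : ℝ :=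
  Int.fract (ξ (Tuple.sort (fun i => Int.fract (ξ i)) r))

noncomputable def liftedPoint (n : ℤ) : ℝ :=
  (Int.divModEquiv m n).1 + sortedFract ξ (Int.divModEquiv m n).2

noncomputable def liftedIndex (n : ℤ) : Fin m :=
  Tuple.sort (fun i => Int.fract (ξ i)) (Int.divModEquiv m n).2

omit [NeZero m] in
lemma strictMono_sortedFract (hinj : Injective fun i => Int.fract (ξ i)) :
    StrictMono (sortedFract ξ) :=
  (Tuple.monotone_sort _).strictMono_of_injective (hinj.comp (Tuple.sort _).injective)

lemma exists_eq_mul_add (n : ℤ) : ∃ (q : ℤ) (r : Fin m), n = q * m + r :=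
  ⟨_, _, ((Int.divModEquiv m).symm_apply_apply n).symm⟩

lemma divModEquiv_mul_add (q : ℤ) (r : Fin m) : Int.divModEquiv m (q * m + r) = (q, r) :=
  (Int.divModEquiv m).apply_symm_apply (q, r)

lemma liftedPoint_mul_add (q : ℤ) (r : Fin m) :
    liftedPoint ξ (q * m + r) = q + sortedFract ξ r := by
  rw [liftedPoint, divModEquiv_mul_add]

lemma liftedIndex_mul_add (q : ℤ) (r : Fin m) :
    liftedIndex ξ (q * m + r) = Tuple.sort (fun i => Int.fract (ξ i)) r := by
  rw [liftedIndex, divModEquiv_mul_add]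

lemma liftedPoint_add (n : ℤ) : liftedPoint ξ (n + m) = liftedPoint ξ n + 1 := by
  obtain ⟨q, r, rfl⟩ := exists_eq_mul_add (m := m) n
  rw [add_right_comm, ← add_one_mul, liftedPoint_mul_add, liftedPoint_mul_add]
  push_cast
  ring

lemma liftedIndex_periodic : Periodic (liftedIndex ξ) m := fun n => by
  obtain ⟨q, r, rfl⟩ := exists_eq_mul_add (m := m) n
  rw [add_right_comm, ← add_one_mul, liftedIndex_mul_add, liftedIndex_mul_add]

lemma fract_liftedIndex (n : ℤ) :
    Int.fract (ξ (liftedIndex ξ n)) = Int.fract (liftedPoint ξ n) := by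
  obtain ⟨q, r, rfl⟩ := exists_eq_mul_add (m := m) n
  rw [liftedIndex_mul_add, liftedPoint_mul_add, Int.fract_intCast_add, sortedFract,
    Int.fract_fract]

lemma liftedIndex_surjective : Surjective (liftedIndex ξ) := fun i =>
  ⟨0 * m + ((Tuple.sort _).symm i : Fin m), by rw [liftedIndex_mul_add, Equiv.apply_symm_apply]⟩

lemma strictMono_liftedPoint (hinj : Injective fun i => Int.fract (ξ i)) :
    StrictMono (liftedPoint ξ) := by
  refine strictMono_int_of_lt_succ fun n => ?_
  obtain ⟨q, r, rfl⟩ := exists_eq_mul_add (m := m) n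
  have hr : sortedFract ξ r < 1 := Int.fract_lt_one _
  rw [liftedPoint_mul_add]
  by_cases hlast : (r : ℕ) + 1 < m
  · have : q * m + r + 1 = q * m + ((⟨r + 1, hlast⟩ : Fin m) : ℕ) := by push_cast; ring
    rw [this, liftedPoint_mul_add, add_lt_add_iff_left]
    exact strictMono_sortedFract ξ hinj (Fin.lt_def.2 (Nat.lt_succ_self _))
  · have hr' : (r : ℤ) + 1 = m := by have := r.isLt; omega
    have : q * m + r + 1 = (q + 1) * m + ((0 : Fin m) : ℕ) := by
      rw [Fin.val_zero, Nat.cast_zero]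
      linear_combination hr'
    rw [this, liftedPoint_mul_add]
    have : 0 ≤ sortedFract ξ 0 := Int.fract_nonneg _
    push_cast
    linarith

end Enumeration

section Points

variable {m : ℕ} [NeZero m] {ξ : Fin m → ℝ}

lemma exists_liftedIndex_eq_liftedPoint_mem_Ico (i : Fin m) (x : ℝ) :
    ∃ k, liftedIndex ξ k = i ∧ liftedPoint ξ k ∈ Set.Ico x (x + 1) := by
  obtain ⟨k, rfl⟩ := liftedIndex_surjective ξ i
  refine ⟨k + ⌈x - liftedPoint ξ k⌉ * m, (liftedIndex_periodic ξ).int_mul _ k, ?_⟩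
  rw [apply_add_mul (liftedPoint_add ξ)]
  constructor <;>
    linarith [Int.le_ceil (x - liftedPoint ξ k), Int.ceil_lt_add_one (x - liftedPoint ξ k)]

lemma exists_eq_liftedPoint_add (k : ℤ) : ∃ z : ℤ, ξ (liftedIndex ξ k) = liftedPoint ξ k + z := by
  obtain ⟨z, hz⟩ := Int.fract_eq_fract.1 (fract_liftedIndex ξ k)
  exact ⟨z, by linarith⟩

lemma exists_eq_add_mul_of_liftedIndex_eq (hinj : Injective fun i => Int.fract (ξ i)) {k k' : ℤ}
    (h : liftedIndex ξ k = liftedIndex ξ k') : ∃ z : ℤ, k' = k + z * m := by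
  obtain ⟨z, hz⟩ := exists_eq_liftedPoint_add (ξ := ξ) k
  obtain ⟨z', hz'⟩ := exists_eq_liftedPoint_add (ξ := ξ) k'
  refine ⟨z - z', (strictMono_liftedPoint ξ hinj).injective ?_⟩
  rw [apply_add_mul (liftedPoint_add ξ), ← h] at *
  push_cast
  linarith

lemma liftedPoint_ne_add {δ : ℝ} (hδ0 : 0 ≤ δ) (hδ1 : δ < 1)
    (hδne : ∀ i j : Fin m, Int.fract (ξ i - ξ j) ≠ δ) (k n : ℤ) :
    liftedPoint ξ k ≠ liftedPoint ξ n + δ := fun h => by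
  obtain ⟨z, hz⟩ := exists_eq_liftedPoint_add (ξ := ξ) k
  obtain ⟨z', hz'⟩ := exists_eq_liftedPoint_add (ξ := ξ) n
  refine hδne (liftedIndex ξ k) (liftedIndex ξ n) (Int.fract_eq_iff.2 ⟨hδ0, hδ1, z - z', ?_⟩)
  push_cast
  linarith

lemma card_eq_indexAbove_sub (hinj : Injective fun i => Int.fract (ξ i)) {δ : ℝ} (hδ1 : δ ≤ 1)
    (x : ℝ) : Nat.card {i : Fin m // Int.fract (ξ i - x) < δ} =
      (indexAbove (liftedPoint ξ) (x + δ) - indexAbove (liftedPoint ξ) x).toNat := by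
  have ht := strictMono_liftedPoint ξ hinj
  have hper := liftedPoint_add ξ
  have hmem : ∀ k, k ∈ Finset.Ico (indexAbove (liftedPoint ξ) x)
      (indexAbove (liftedPoint ξ) (x + δ)) ↔ x ≤ liftedPoint ξ k ∧ liftedPoint ξ k < x + δ := by
    intro k
    rw [Finset.mem_Ico, indexAbove_le_iff ht hper, lt_indexAbove_iff ht hper]
  have hfract : ∀ k, x ≤ liftedPoint ξ k → liftedPoint ξ k < x + 1 →
      Int.fract (ξ (liftedIndex ξ k) - x) = liftedPoint ξ k - x := fun k h0 h1 => by
    obtain ⟨z, hz⟩ := exists_eq_liftedPoint_add (ξ := ξ) k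
    exact Int.fract_eq_iff.2 ⟨by linarith, by linarith, z, by rw [hz]; ring⟩
  rw [Nat.card_eq_fintype_card, Fintype.card_subtype, ← Int.card_Ico]
  symm
  refine Finset.card_nbij (liftedIndex ξ) (fun k hk => ?_) (fun k hk k' hk' h => ?_) ?_
  · rw [Finset.mem_coe, hmem] at hk
    rw [Finset.mem_coe, Finset.mem_filter, hfract k hk.1 (by linarith)]
    exact ⟨Finset.mem_univ _, by linarith⟩
  · rw [Finset.mem_coe, hmem] at hk hk'
    obtain ⟨z, rfl⟩ := exists_eq_add_mul_of_liftedIndex_eq hinj h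
    rw [apply_add_mul hper] at hk'
    have h1 : z < 1 := by exact_mod_cast (by linarith : (z : ℝ) < 1)
    have h2 : -1 < z := by exact_mod_cast (by linarith : (-1 : ℝ) < z)
    have : z = 0 := by omega
    simp [this]
  · intro i hi
    rw [Finset.mem_coe, Finset.mem_filter] at hi
    obtain ⟨k, rfl, hk0, hk1⟩ := exists_liftedIndex_eq_liftedPoint_mem_Ico (ξ := ξ) i x
    refine ⟨k, ?_, rfl⟩
    rw [Finset.mem_coe, hmem]
    rw [hfract k hk0 hk1] at hi
    exact ⟨hk0, by linarith [hi.2]⟩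

variable {δ : ℝ} (hinj : Injective fun i => Int.fract (ξ i)) (hδ0 : 0 < δ) (hδ1 : δ < 1)
  (hδne : ∀ i j : Fin m, Int.fract (ξ i - ξ j) ≠ δ)
include hinj hδ0 hδ1 hδne

lemma balancedIntervals_iff_strictMono_leftIndex :
    BalancedIntervals m ξ δ ↔ StrictMono (leftIndex (liftedPoint ξ) δ) := by
  simp only [BalancedIntervals, card_eq_indexAbove_sub hinj hδ1.le]
  exact exists_count_iff_strictMono_leftIndex (strictMono_liftedPoint ξ hinj) (liftedPoint_add ξ)
    hδ0 (liftedPoint_ne_add hδ0.le hδ1 hδne)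

variable {f : Fin m → Fin m}
  (hf : ∀ l i : Fin m, Int.fract (ξ l + δ - ξ (f l)) ≤ Int.fract (ξ l + δ - ξ i))
include hf

lemma apply_liftedIndex_eq (n : ℤ) :
    f (liftedIndex ξ n) = liftedIndex ξ (leftIndex (liftedPoint ξ) δ n) := by
  have ht := strictMono_liftedPoint ξ hinj
  have hper := liftedPoint_add ξ
  obtain ⟨k, hk, hk0, hk1⟩ := exists_liftedIndex_eq_liftedPoint_mem_Ico (ξ := ξ)
    (f (liftedIndex ξ n)) (liftedPoint ξ n + δ - 1)
  set t := liftedPoint ξ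
  set g := leftIndex t δ n
  have hfract : ∀ k, t n + δ - 1 < t k → t k < t n + δ →
      Int.fract (ξ (liftedIndex ξ n) + δ - ξ (liftedIndex ξ k)) = t n + δ - t k :=
    fun k h0 h1 => by
      obtain ⟨z, hz⟩ := exists_eq_liftedPoint_add (ξ := ξ) n
      obtain ⟨z', hz'⟩ := exists_eq_liftedPoint_add (ξ := ξ) k
      exact Int.fract_eq_iff.2 ⟨by linarith, by linarith, z - z', by rw [hz, hz']; push_cast; ring⟩
  have hk0' : t n + δ - 1 < t k := by
    refine hk0.lt_of_ne fun h => liftedPoint_ne_add hδ0.le hδ1 hδne (k + m) n ?_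
    show t (k + m) = t n + δ
    rw [hper, ← h]
    ring
  have hk1' : t k < t n + δ := by linarith
  have hkg : k ≤ g := by
    have := (lt_indexAbove_iff ht hper).2 hk1'
    simp only [g, leftIndex]
    omega
  have hg := apply_leftIndex_lt ht hper (δ := δ) n
  have hmin := hf (liftedIndex ξ n) (liftedIndex ξ g)
  rw [← hk, hfract k hk0' hk1', hfract g (by linarith [ht.monotone hkg]) hg] at hmin
  rw [← hk, le_antisymm hkg (ht.le_iff_le.1 (by linarith))]

lemma bijective_iff_strictMono_leftIndex :
    Bijective f ↔ StrictMono (leftIndex (liftedPoint ξ) δ) := by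
  have ht := strictMono_liftedPoint ξ hinj
  have hper := liftedPoint_add ξ
  have hfg := apply_liftedIndex_eq hinj hδ0 hδ1 hδne hf
  constructor
  · intro hbij
    refine strictMono_int_of_lt_succ fun n =>
      (leftIndex_mono ht hper (lt_add_one n).le).lt_of_ne fun heq => ?_
    have hf_eq : f (liftedIndex ξ n) = f (liftedIndex ξ (n + 1)) := by rw [hfg, hfg, heq]
    obtain ⟨z, hz⟩ := exists_eq_add_mul_of_liftedIndex_eq hinj (hbij.1 hf_eq)
    have hm : (m : ℤ) = 1 :=
      Int.eq_one_of_mul_eq_one_left (Int.natCast_nonneg m) (a := z) (by omega)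
    have := leftIndex_add ht hper (δ := δ) n
    rw [hm, heq] at this
    omega
  · intro hg
    have hlin := eq_add_apply_zero_of_strictMono (NeZero.pos m) hg (leftIndex_add ht hper)
    refine Surjective.bijective_of_finite fun i => ?_
    obtain ⟨k, rfl⟩ := liftedIndex_surjective ξ i
    exact ⟨liftedIndex ξ (k - leftIndex (liftedPoint ξ) δ 0), by rw [hfg, hlin, sub_add_cancel]⟩

end Points

end TorusBalance

theorem stmt3 (m : ℕ) (hm : 1 ≤ m) (ξ : Fin m → ℝ) (δ : ℝ) (hδ : δ ∈ Set.Ioo (0:ℝ) 1)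
    (hdist : ∀ i j : Fin m, i ≠ j → Int.fract (ξ i - ξ j) ≠ 0)
    (hδne : ∀ i j : Fin m, Int.fract (ξ i - ξ j) ≠ δ)
    (f : Fin m → Fin m)
    (hf : ∀ l i : Fin m, Int.fract (ξ l + δ - ξ (f l)) ≤ Int.fract (ξ l + δ - ξ i)) :
    BalancedIntervals m ξ δ ↔ Function.Bijective f := by
  obtain ⟨hδ0, hδ1⟩ := hδ
  have : NeZero m := ⟨by omega⟩
  have hinj : Function.Injective fun i => Int.fract (ξ i) := fun i j h => by
    by_contra hne
    obtain ⟨z, hz⟩ := Int.fract_eq_fract.1 h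
    exact hdist i j hne (by rw [hz, Int.fract_intCast])
  rw [TorusBalance.balancedIntervals_iff_strictMono_leftIndex hinj hδ0 hδ1 hδne,
    TorusBalance.bijective_iff_strictMono_leftIndex hinj hδ0 hδ1 hδne hf]
end

section
/- Let α ∈ (0,1) be irrational with continued fraction convergents p_k/q_k. For every L ≥ 1, the sum Σ_{t=0}^{∞} a_{L+2+2t} ‖q_{L+1+2t} α‖ equals ‖q_L α‖, where a_j are the partial quotients of α and ‖·‖ is the distance to the nearest integer. -/
/-- Gauss-map iterates of `α`. -/
noncomputable def cfFrac (α : ℝ) : ℕ → ℝ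
  | 0 => α
  | k + 1 => Int.fract (1 / cfFrac α k)

/-- Partial quotients of `α` (1-indexed, `cfA α 0 = 0` unused). -/
noncomputable def cfA (α : ℝ) : ℕ → ℕ
  | 0 => 0
  | k + 1 => (⌊1 / cfFrac α k⌋).toNat

/-- Numerators of the convergents of `α`. -/
noncomputable def cfP (α : ℝ) : ℕ → ℕ
  | 0 => 0
  | 1 => 1
  | k + 2 => cfA α (k + 2) * cfP α (k + 1) + cfP α k

/-- Denominators of the convergents of `α`. -/
noncomputable def cfQ (α : ℝ) : ℕ → ℕ
  | 0 => 1
  | 1 => cfA α 1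
  | k + 2 => cfA α (k + 2) * cfQ α (k + 1) + cfQ α k

/-- Distance from `x` to the nearest integer. -/
noncomputable def distNearInt (x : ℝ) : ℝ := min (Int.fract x) (1 - Int.fract x)

/-!
Write `x_k` for the Gauss-map iterates, so that `a_{k+1} = ⌊1/x_k⌋` and
`x_k x_{k+1} = 1 - a_{k+1} x_k`. The products `β_k = x_0 ⋯ x_k` satisfy
`q_k α - p_k = (-1)^k β_k` and the recurrence `β_{k+2} = β_k - a_{k+2} β_{k+1}`.
Since `x_k x_{k+1} < 1/2`, we get `β_k < 1/2` for `k ≥ 1`, hence `‖q_k α‖ = β_k`, and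
`β_{k+2} < β_k / 2`. So `a_{L+2+2t} ‖q_{L+1+2t} α‖ = β_{L+2t} - β_{L+2t+2}`, and the sum
telescopes to `β_L = ‖q_L α‖`.
-/

open Filter Topology Finset

lemma hasSum_sub_succ_of_antitone {f : ℕ → ℝ} (hf : Antitone f)
    (hlim : Tendsto f atTop (𝓝 0)) :
    HasSum (fun n => f n - f (n + 1)) (f 0) := by
  rw [hasSum_iff_tendsto_nat_of_nonneg fun n => sub_nonneg.2 (hf n.le_succ)]
  simp only [sum_range_sub']
  simpa using hlim.const_sub (f 0)

lemma distNearInt_intCast_add (n : ℤ) {e : ℝ} (he : e ∈ Set.Ico (-(1 / 2)) (1 / 2)) :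
    distNearInt (n + e) = |e| := by
  rw [distNearInt, ← abs_sub_round_eq_min, round_intCast_add, round_eq_zero_iff.2 he]
  simp

variable {α : ℝ}

lemma irrational_cfFrac (hirr : Irrational α) : ∀ k, Irrational (cfFrac α k)
  | 0 => hirr
  | k + 1 => by
    rw [cfFrac, Int.fract, one_div]
    exact (irrational_cfFrac hirr k).inv.sub_intCast _

lemma cfFrac_mem_Ioo (hα : α ∈ Set.Ioo 0 1) (hirr : Irrational α) :
    ∀ k, cfFrac α k ∈ Set.Ioo 0 1
  | 0 => hα
  | k + 1 =>
    ⟨(Int.fract_nonneg _).lt_of_ne' (irrational_cfFrac hirr (k + 1)).ne_zero,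
      Int.fract_lt_one _⟩

lemma cfA_succ_eq {k : ℕ} (hx : 0 ≤ cfFrac α k) :
    (cfA α (k + 1) : ℝ) = 1 / cfFrac α k - cfFrac α (k + 1) := by
  have hfloor : 0 ≤ ⌊1 / cfFrac α k⌋ := Int.floor_nonneg.2 (by positivity)
  rw [cfA, cfFrac, Int.self_sub_fract]
  exact_mod_cast Int.toNat_of_nonneg hfloor

lemma one_le_cfA_succ {k : ℕ} (hx : cfFrac α k ∈ Set.Ioo 0 1) : 1 ≤ cfA α (k + 1) := by
  have : 1 ≤ ⌊1 / cfFrac α k⌋ := Int.le_floor.2 (by simpa using one_le_one_div hx.1 hx.2.le)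
  simp only [cfA]
  omega

lemma cfFrac_mul_cfFrac_succ {k : ℕ} (hx : 0 < cfFrac α k) :
    cfFrac α k * cfFrac α (k + 1) = 1 - cfA α (k + 1) * cfFrac α k := by
  rw [cfA_succ_eq hx.le]
  field_simp
  ring

lemma cfFrac_mul_cfFrac_succ_lt_half {k : ℕ} (hx : cfFrac α k ∈ Set.Ioo 0 1) :
    cfFrac α k * cfFrac α (k + 1) < 1 / 2 := by
  have hlt : cfFrac α k * cfFrac α (k + 1) < cfFrac α k :=
    mul_lt_of_lt_one_right hx.1 (Int.fract_lt_one _)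
  have hle : cfFrac α k * cfFrac α (k + 1) ≤ 1 - cfFrac α k := by
    have ha : (1 : ℝ) ≤ cfA α (k + 1) := by exact_mod_cast one_le_cfA_succ hx
    rw [cfFrac_mul_cfFrac_succ hx.1]
    nlinarith [hx.1]
  linarith

noncomputable def cfBeta (α : ℝ) (k : ℕ) : ℝ := ∏ i ∈ range (k + 1), cfFrac α i

lemma cfBeta_succ (k : ℕ) : cfBeta α (k + 1) = cfBeta α k * cfFrac α (k + 1) :=
  prod_range_succ _ _

lemma cfBeta_one : cfBeta α 1 = cfFrac α 0 * cfFrac α 1 := by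
  simp [cfBeta, prod_range_succ]

lemma cfBeta_add_two (k : ℕ) :
    cfBeta α (k + 2) = cfBeta α k * (cfFrac α (k + 1) * cfFrac α (k + 2)) := by
  rw [cfBeta_succ, cfBeta_succ, mul_assoc]

lemma cfBeta_pos (hα : α ∈ Set.Ioo 0 1) (hirr : Irrational α) (k : ℕ) : 0 < cfBeta α k :=
  prod_pos fun i _ => (cfFrac_mem_Ioo hα hirr i).1

lemma cfBeta_le_one (hα : α ∈ Set.Ioo 0 1) (hirr : Irrational α) (k : ℕ) :
    cfBeta α k ≤ 1 :=
  prod_le_one (fun i _ => (cfFrac_mem_Ioo hα hirr i).1.le)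
    (fun i _ => (cfFrac_mem_Ioo hα hirr i).2.le)

lemma antitone_cfBeta (hα : α ∈ Set.Ioo 0 1) (hirr : Irrational α) : Antitone (cfBeta α) :=
  antitone_nat_of_succ_le fun k => by
    rw [cfBeta_succ]
    exact mul_le_of_le_one_right (cfBeta_pos hα hirr k).le (cfFrac_mem_Ioo hα hirr _).2.le

lemma cfBeta_add_two_eq_sub (hα : α ∈ Set.Ioo 0 1) (hirr : Irrational α) (k : ℕ) :
    cfBeta α (k + 2) = cfBeta α k - cfA α (k + 2) * cfBeta α (k + 1) := by
  rw [cfBeta_add_two, cfFrac_mul_cfFrac_succ (cfFrac_mem_Ioo hα hirr _).1, cfBeta_succ]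
  ring

lemma cfBeta_lt_half (hα : α ∈ Set.Ioo 0 1) (hirr : Irrational α) :
    ∀ k, 1 ≤ k → cfBeta α k < 1 / 2
  | 1, _ => cfBeta_one (α := α) ▸ cfFrac_mul_cfFrac_succ_lt_half (cfFrac_mem_Ioo hα hirr 0)
  | k + 2, _ => by
    rw [cfBeta_add_two]
    have hx := cfFrac_mem_Ioo hα hirr
    exact (mul_le_of_le_one_left (mul_pos (hx _).1 (hx _).1).le
      (cfBeta_le_one hα hirr k)).trans_lt (cfFrac_mul_cfFrac_succ_lt_half (hx _))

lemma cfBeta_add_two_mul_le (hα : α ∈ Set.Ioo 0 1) (hirr : Irrational α) (k n : ℕ) :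
    cfBeta α (k + 2 * n) ≤ (1 / 2) ^ n := by
  have hx := cfFrac_mem_Ioo hα hirr
  induction n with
  | zero => simpa using cfBeta_le_one hα hirr k
  | succ n ih =>
    calc cfBeta α (k + 2 * (n + 1))
        = cfBeta α (k + 2 * n) * (cfFrac α (k + 2 * n + 1) * cfFrac α (k + 2 * n + 2)) :=
          cfBeta_add_two _
      _ ≤ (1 / 2) ^ n * (1 / 2) :=
          mul_le_mul ih (cfFrac_mul_cfFrac_succ_lt_half (hx _)).le
            (mul_pos (hx _).1 (hx _).1).le (by positivity)
      _ = (1 / 2) ^ (n + 1) := (pow_succ _ _).symm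

lemma tendsto_cfBeta_add_two_mul (hα : α ∈ Set.Ioo 0 1) (hirr : Irrational α) (k : ℕ) :
    Tendsto (fun n => cfBeta α (k + 2 * n)) atTop (𝓝 0) :=
  squeeze_zero (fun n => (cfBeta_pos hα hirr _).le) (cfBeta_add_two_mul_le hα hirr k)
    (tendsto_pow_atTop_nhds_zero_of_lt_one (by norm_num) (by norm_num))

lemma cfQ_mul_sub_cfP (hα : α ∈ Set.Ioo 0 1) (hirr : Irrational α) (k : ℕ) :
    (cfQ α k : ℝ) * α - cfP α k = (-1) ^ k * cfBeta α k := by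
  induction k using Nat.twoStepInduction with
  | zero => simp [cfQ, cfP, cfBeta, cfFrac]
  | one =>
    have h := cfFrac_mul_cfFrac_succ (k := 0) (cfFrac_mem_Ioo hα hirr 0).1
    simp only [cfFrac] at h
    simp only [cfQ, cfP, cfBeta_one, cfFrac]
    push_cast
    linarith
  | more k ih₀ ih₁ =>
    simp only [cfQ, cfP, cfBeta_add_two_eq_sub hα hirr, pow_succ] at ih₁ ⊢
    push_cast
    linear_combination (cfA α (k + 2) : ℝ) * ih₁ + ih₀

lemma distNearInt_cfQ_mul (hα : α ∈ Set.Ioo 0 1) (hirr : Irrational α) {k : ℕ}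
    (hk : 1 ≤ k) :
    distNearInt (cfQ α k * α) = cfBeta α k := by
  have hβ := cfBeta_pos hα hirr k
  have habs : |(-1) ^ k * cfBeta α k| = cfBeta α k := by simp [abs_of_pos hβ]
  have hbound := abs_lt.1 (habs ▸ cfBeta_lt_half hα hirr k hk)
  have hsplit : (cfQ α k : ℝ) * α = ((cfP α k : ℤ) : ℝ) + (-1) ^ k * cfBeta α k := by
    push_cast
    linarith [cfQ_mul_sub_cfP hα hirr k]
  rw [hsplit, distNearInt_intCast_add _ ⟨hbound.1.le, hbound.2⟩, habs]

theorem stmt6 (α : ℝ) (hα : α ∈ Set.Ioo (0:ℝ) 1) (hirr : Irrational α) (L : ℕ) (hL : 1 ≤ L) :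
    (∑' t : ℕ, (cfA α (L + 2 + 2 * t) : ℝ) * distNearInt ((cfQ α (L + 1 + 2 * t) : ℝ) * α)) =
      distNearInt ((cfQ α L : ℝ) * α) := by
  have hterm : ∀ t : ℕ,
      (cfA α (L + 2 + 2 * t) : ℝ) * distNearInt ((cfQ α (L + 1 + 2 * t) : ℝ) * α) =
        cfBeta α (L + 2 * t) - cfBeta α (L + 2 * (t + 1)) := fun t => by
    rw [distNearInt_cfQ_mul hα hirr (by omega), show L + 2 * (t + 1) = L + 2 * t + 2 by ring,
      cfBeta_add_two_eq_sub hα hirr, show L + 2 + 2 * t = L + 2 * t + 2 by ring,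
      show L + 1 + 2 * t = L + 2 * t + 1 by ring]
    ring
  have hanti : Antitone fun t => cfBeta α (L + 2 * t) :=
    (antitone_cfBeta hα hirr).comp_monotone fun _ _ h => by omega
  rw [distNearInt_cfQ_mul hα hirr hL, funext hterm]
  simpa using (hasSum_sub_succ_of_antitone hanti (tendsto_cfBeta_add_two_mul hα hirr L)).tsum_eq
end

section
/- Let α ∈ (0,1) be irrational and let n have k_0(n) = L. Let ∥·∥* be the one-sided distance with ∥nα∥* = ‖nα‖. Then ∥nα∥* = min{ ∥xα∥* : n − q_L < x < n + q_L, x ∈ ℤ }, i.e., n minimizes the one-sided distance of xα to ℤ among all integers within distance less than q_L of n. -/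
/-- `b` is the sequence of digits of an Ostrowski representation of `n` w.r.t. `α`:
`n = Σ b_k q_k` with `0 ≤ b_0 ≤ a_1 - 1`, `0 ≤ b_k ≤ a_{k+1}` for `k ≥ 1`, and
`b_{k-1} = 0` whenever `b_k = a_{k+1}`. -/
def OstrowskiRep (α : ℝ) (n : ℕ) (b : ℕ → ℕ) : Prop :=
  b 0 ≤ cfA α 1 - 1 ∧
  (∀ k, 1 ≤ k → b k ≤ cfA α (k + 1)) ∧
  (∀ k, 1 ≤ k → b k = cfA α (k + 1) → b (k - 1) = 0) ∧
  ∃ N, (∀ k, N < k → b k = 0) ∧ n = ∑ k ∈ Finset.range (N + 1), b k * cfQ α k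

/-!
Put `θ_k = q_k α - p_k`; then `θ_k = (-1)^k β_0 ⋯ β_k` for the Gauss iterates `β_i`, so
`|θ_k| = a_{k+2} |θ_{k+1}| + |θ_{k+2}|`. Writing `n = Σ b_k q_k` gives `nα ≡ Σ_{k ≥ L} b_k θ_k`
modulo `1`, and the digit bounds `b_k ≤ a_{k+1}` together with the alternating signs bound this
sum by `|θ_{L-1}|`, hence `‖nα‖ ≤ |θ_{L-1}|`. If some `x` with `|x - n| < q_L` had
`f(xα) < f(nα)`, then `m = ±(n - x)` would satisfy `‖mα‖ ≤ f(nα) - f(xα) < ‖nα‖ ≤ |θ_{L-1}|`,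
against the best-approximation property `‖mα‖ ≥ |θ_{L-1}|` for `0 < |m| < q_L`, which follows
by writing `m = u q_{L-1} + v q_L` with integers `u, v` of opposite signs.
-/

open Finset

theorem Irrational.fract_pos {y : ℝ} (h : Irrational y) : 0 < Int.fract y :=
  (Int.fract_nonneg y).lt_of_ne' (Int.fract_ne_zero_iff.2 fun ⟨z, hz⟩ => h.ne_int z hz.symm)

theorem abs_le_abs_add_of_mul_nonneg {R : Type*} [CommRing R] [LinearOrder R]
    [IsStrictOrderedRing R] {a b : R} (h : 0 ≤ a * b) : |a| ≤ |a + b| :=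
  sq_le_sq.1 (by nlinarith [sq_nonneg b])

theorem distNearInt_add_intCast (y : ℝ) (k : ℤ) : distNearInt (y + k) = distNearInt y := by
  simp only [distNearInt, Int.fract_add_intCast]

theorem distNearInt_le_abs (y : ℝ) : distNearInt y ≤ |y| := by
  rw [distNearInt, ← abs_sub_round_eq_min]
  simpa using round_le y 0

theorem distNearInt_sub_lt_fract {y z : ℝ} (hz : 0 < Int.fract z) (h : Int.fract z < Int.fract y) :
    distNearInt (y - z) < Int.fract y := by
  have hyz : y - z = (Int.fract y - Int.fract z) + ((⌊y⌋ - ⌊z⌋ : ℤ) : ℝ) := by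
    push_cast [Int.fract]; ring
  rw [hyz, distNearInt_add_intCast]
  calc distNearInt (Int.fract y - Int.fract z) ≤ |Int.fract y - Int.fract z| := distNearInt_le_abs _
    _ < Int.fract y := by rw [abs_of_pos (sub_pos.2 h)]; linarith

noncomputable def cfErr (α : ℝ) (k : ℕ) : ℝ := cfQ α k * α - cfP α k

noncomputable def cfProd (α : ℝ) (k : ℕ) : ℝ := ∏ i ∈ range (k + 1), cfFrac α i

theorem cfErr_add_two (α : ℝ) (k : ℕ) :
    cfErr α (k + 2) = cfA α (k + 2) * cfErr α (k + 1) + cfErr α k := by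
  simp only [cfErr, cfQ, cfP]
  push_cast
  ring

theorem cfP_mul_cfQ_sub (α : ℝ) (k : ℕ) :
    (cfP α (k + 1) * cfQ α k - cfP α k * cfQ α (k + 1) : ℤ) = (-1) ^ k := by
  induction k with
  | zero => simp [cfP, cfQ]
  | succ k ih =>
    simp only [cfP, cfQ]
    push_cast
    linear_combination -ih

theorem exists_eq_cfQ_combination (α : ℝ) (l : ℕ) (m p : ℤ) :
    ∃ u v : ℤ, u * cfQ α l + v * cfQ α (l + 1) = m ∧ u * cfP α l + v * cfP α (l + 1) = p := by
  have hdet := cfP_mul_cfQ_sub α l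
  have he : ((-1 : ℤ) ^ l) * (-1) ^ l = 1 := by rw [← mul_pow]; norm_num
  refine ⟨(-1) ^ l * (m * cfP α (l + 1) - p * cfQ α (l + 1)),
    (-1) ^ l * (cfQ α l * p - cfP α l * m), ?_, ?_⟩
  · linear_combination ((-1) ^ l * m) * hdet + m * he
  · linear_combination ((-1) ^ l * p) * hdet + p * he

theorem cfProd_succ (α : ℝ) (k : ℕ) : cfProd α (k + 1) = cfFrac α (k + 1) * cfProd α k := by
  rw [cfProd, prod_range_succ, mul_comm]
  rfl

section
variable {α : ℝ} (hα : α ∈ Set.Ioo (0:ℝ) 1) (hirr : Irrational α)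
include hα hirr

theorem cfFrac_mem_Ioo_and_irrational (k : ℕ) :
    cfFrac α k ∈ Set.Ioo 0 1 ∧ Irrational (cfFrac α k) := by
  induction k with
  | zero => exact ⟨hα, hirr⟩
  | succ k ih =>
    have hinv : Irrational (1 / cfFrac α k) := one_div (cfFrac α k) ▸ ih.2.inv
    exact ⟨⟨hinv.fract_pos, Int.fract_lt_one _⟩, hinv.sub_intCast _⟩

theorem cfFrac_pos (k : ℕ) : 0 < cfFrac α k := (cfFrac_mem_Ioo_and_irrational hα hirr k).1.1

theorem cfFrac_lt_one (k : ℕ) : cfFrac α k < 1 := (cfFrac_mem_Ioo_and_irrational hα hirr k).1.2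

theorem cfFrac_succ (k : ℕ) : cfFrac α (k + 1) = 1 / cfFrac α k - cfA α (k + 1) := by
  have h0 : 0 ≤ ⌊1 / cfFrac α k⌋ := Int.floor_nonneg.2 (one_div_pos.2 (cfFrac_pos hα hirr k)).le
  have hcast : ((⌊1 / cfFrac α k⌋.toNat : ℕ) : ℝ) = ⌊1 / cfFrac α k⌋ := by
    exact_mod_cast Int.toNat_of_nonneg h0
  rw [cfFrac, cfA, hcast, Int.fract]

theorem cfErr_succ (k : ℕ) : cfErr α (k + 1) = -cfFrac α (k + 1) * cfErr α k := by
  induction k with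
  | zero =>
    have hα0 : α ≠ 0 := hα.1.ne'
    rw [cfFrac_succ hα hirr]
    simp only [cfErr, cfQ, cfP, cfFrac]
    field_simp
    push_cast
    ring
  | succ k ih =>
    have hβ : cfFrac α (k + 1) ≠ 0 := (cfFrac_pos hα hirr (k + 1)).ne'
    have hk : cfErr α k = -cfErr α (k + 1) / cfFrac α (k + 1) := by
      rw [ih]; field_simp
    rw [cfErr_add_two, cfFrac_succ hα hirr (k + 1), hk]
    field_simp
    ring

theorem cfErr_eq (k : ℕ) : cfErr α k = (-1) ^ k * cfProd α k := by
  induction k with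
  | zero => simp [cfErr, cfProd, cfQ, cfP, cfFrac]
  | succ k ih =>
    rw [cfErr_succ hα hirr, ih, cfProd_succ, pow_succ]
    ring

theorem cfProd_pos (k : ℕ) : 0 < cfProd α k :=
  prod_pos fun i _ => cfFrac_pos hα hirr i

theorem cfProd_succ_le (k : ℕ) : cfProd α (k + 1) ≤ cfProd α k := by
  rw [cfProd_succ]
  exact mul_le_of_le_one_left (cfProd_pos hα hirr k).le (cfFrac_lt_one hα hirr (k + 1)).le

theorem cfProd_eq_cfA_mul_add (k : ℕ) :
    cfProd α k = cfA α (k + 2) * cfProd α (k + 1) + cfProd α (k + 2) := by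
  have h := cfErr_add_two α k
  rw [cfErr_eq hα hirr, cfErr_eq hα hirr, cfErr_eq hα hirr, pow_succ, pow_succ] at h
  refine mul_left_cancel₀ (pow_ne_zero k (neg_ne_zero.2 one_ne_zero)) ?_
  linear_combination -h

theorem cfProd_le_abs_mul_sub (l : ℕ) {m : ℤ} (hm0 : m ≠ 0) (hm : |m| < cfQ α (l + 1)) (p : ℤ) :
    cfProd α l ≤ |m * α - p| := by
  obtain ⟨u, v, hmuv, hpuv⟩ := exists_eq_cfQ_combination α l m p
  have hfar : v ≠ 0 → 0 ≤ u * v → False := fun hv huv => by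
    have hprod : 0 ≤ v * cfQ α (l + 1) * (u * cfQ α l) := by
      have := mul_nonneg huv (by positivity : (0 : ℤ) ≤ cfQ α (l + 1) * cfQ α l)
      linarith
    have : (cfQ α (l + 1) : ℤ) ≤ |m| := calc
      (cfQ α (l + 1) : ℤ) ≤ |v| * cfQ α (l + 1) :=
        le_mul_of_one_le_left (by positivity) (Int.one_le_abs hv)
      _ = |v * cfQ α (l + 1)| := by rw [abs_mul, Nat.abs_cast]
      _ ≤ |v * cfQ α (l + 1) + u * cfQ α l| := abs_le_abs_add_of_mul_nonneg hprod
      _ = |m| := by rw [← hmuv, add_comm]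
    exact hm.not_ge this
  obtain ⟨hu, huv⟩ : u ≠ 0 ∧ u * v ≤ 0 := by
    rcases eq_or_ne u 0 with rfl | hu
    · exact (hfar (by rintro rfl; simp at hmuv; exact hm0 hmuv.symm) (by simp)).elim
    · exact ⟨hu, not_lt.1 fun h => hfar (by rintro rfl; simp at h) h.le⟩
  have herr : (m : ℝ) * α - p = u * cfErr α l + v * cfErr α (l + 1) := by
    rw [← hmuv, ← hpuv]
    push_cast
    simp only [cfErr]
    ring
  -- consecutive errors alternate in sign, so both terms have the sign of `u * cfErr α l`
  have hsame : 0 ≤ (u * cfErr α l) * (v * cfErr α (l + 1)) := by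
    have huvR : (u : ℝ) * v ≤ 0 := by exact_mod_cast huv
    have hD := mul_pos (cfProd_pos hα hirr l) (cfProd_pos hα hirr (l + 1))
    have hsign : (-1 : ℝ) ^ l * (-1) ^ (l + 1) = -1 := by rw [pow_succ, ← mul_assoc, ← mul_pow]; norm_num
    rw [cfErr_eq hα hirr, cfErr_eq hα hirr]
    calc (0 : ℝ) ≤ -(u * v) * (cfProd α l * cfProd α (l + 1)) := by nlinarith
      _ = _ := by linear_combination (-(u * v) * (cfProd α l * cfProd α (l + 1))) * hsign
  calc cfProd α l ≤ |(u : ℝ)| * cfProd α l :=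
        le_mul_of_one_le_left (cfProd_pos hα hirr l).le (by exact_mod_cast Int.one_le_abs hu)
    _ = |u * cfErr α l| := by
        rw [abs_mul, cfErr_eq hα hirr, abs_mul, abs_pow, abs_neg, abs_one, one_pow, one_mul,
          abs_of_pos (cfProd_pos hα hirr l)]
    _ ≤ |m * α - p| := herr ▸ abs_le_abs_add_of_mul_nonneg hsame

theorem cfProd_le_distNearInt (l : ℕ) {m : ℤ} (hm0 : m ≠ 0) (hm : |m| < cfQ α (l + 1)) :
    cfProd α l ≤ distNearInt (m * α) := by
  rw [distNearInt, ← abs_sub_round_eq_min]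
  exact cfProd_le_abs_mul_sub hα hirr l hm0 hm _

theorem fract_le_fract_of_sub_eq_mul (l : ℕ) {m : ℤ} (hm0 : m ≠ 0) (hm : |m| < cfQ α (l + 1))
    {y z : ℝ} (hyz : y - z = m * α) (hz : 0 < Int.fract z) (hy : Int.fract y ≤ cfProd α l) :
    Int.fract y ≤ Int.fract z := by
  by_contra! h
  have := distNearInt_sub_lt_fract hz h
  rw [hyz] at this
  linarith [cfProd_le_distNearInt hα hirr l hm0 hm]

theorem sum_Ico_mul_cfErr_mem_Icc (b : ℕ → ℕ) (M j : ℕ) (hb : ∀ k, M ≤ k → b k ≤ cfA α (k + 1)) :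
    (-1) ^ M * ∑ k ∈ Ico M (M + j), (b k : ℝ) * cfErr α k ∈
      Set.Icc (-cfProd α M) (cfA α (M + 1) * cfProd α M + cfProd α (M + 1)) := by
  induction j generalizing M with
  | zero =>
    have := cfProd_pos hα hirr M
    have := cfProd_pos hα hirr (M + 1)
    simp only [add_zero, Ico_self, sum_empty, mul_zero, Set.mem_Icc]
    constructor <;> nlinarith [(Nat.cast_nonneg (cfA α (M + 1)) : (0 : ℝ) ≤ _)]
  | succ j ih =>
    obtain ⟨h₁, h₂⟩ := ih (M + 1) fun k hk => hb k (by omega)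
    rw [← cfProd_eq_cfA_mul_add hα hirr] at h₂
    have hbM : (b M : ℝ) ≤ cfA α (M + 1) := by exact_mod_cast hb M le_rfl
    have hD := cfProd_pos hα hirr M
    have hsplit : (-1) ^ M * ∑ k ∈ Ico M (M + (j + 1)), (b k : ℝ) * cfErr α k =
        b M * cfProd α M - (-1) ^ (M + 1) * ∑ k ∈ Ico (M + 1) (M + 1 + j), (b k : ℝ) * cfErr α k := by
      rw [sum_eq_sum_Ico_succ_bot (by omega), cfErr_eq hα hirr, show M + (j + 1) = M + 1 + j by omega]
      have : ((-1 : ℝ) ^ M) * (-1) ^ M = 1 := by rw [← mul_pow]; norm_num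
      linear_combination (b M * cfProd α M) * this
    rw [hsplit, Set.mem_Icc]
    constructor <;> nlinarith [(Nat.cast_nonneg (b M) : (0 : ℝ) ≤ _)]

theorem abs_sum_range_mul_cfErr_le (b : ℕ → ℕ) (l N : ℕ) (hlN : l + 1 ≤ N)
    (hzero : ∀ k, k < l + 1 → b k = 0) (hb : ∀ k, 1 ≤ k → b k ≤ cfA α (k + 1)) :
    |∑ k ∈ range N, (b k : ℝ) * cfErr α k| ≤ cfProd α l := by
  rw [← sum_range_add_sum_Ico _ hlN, sum_eq_zero fun k hk => by simp [hzero k (mem_range.1 hk)],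
    zero_add]
  obtain ⟨h₁, h₂⟩ := sum_Ico_mul_cfErr_mem_Icc hα hirr b (l + 1) (N - (l + 1))
    fun k hk => hb k (by omega)
  rw [Nat.add_sub_cancel' hlN] at h₁ h₂
  rw [← cfProd_eq_cfA_mul_add hα hirr] at h₂
  have := cfProd_succ_le hα hirr l
  calc |∑ k ∈ Ico (l + 1) N, (b k : ℝ) * cfErr α k|
      = |(-1) ^ (l + 1) * ∑ k ∈ Ico (l + 1) N, (b k : ℝ) * cfErr α k| := by simp [abs_mul]
    _ ≤ cfProd α l := abs_le.2 ⟨by linarith, h₂⟩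

end

theorem natCast_sum_mul_cfQ_mul (α : ℝ) (b : ℕ → ℕ) (s : Finset ℕ) :
    ((∑ k ∈ s, b k * cfQ α k : ℕ) : ℝ) * α =
      ∑ k ∈ s, (b k : ℝ) * cfErr α k + ((∑ k ∈ s, b k * cfP α k : ℕ) : ℤ) := by
  push_cast
  rw [sum_mul, ← sum_add_distrib]
  refine sum_congr rfl fun k _ => ?_
  simp only [cfErr]
  ring

theorem stmt16_general (α : ℝ) (hα : α ∈ Set.Ioo (0:ℝ) 1) (hirr : Irrational α)
    (n : ℕ) (b : ℕ → ℕ) (hb : OstrowskiRep α n b)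
    (L : ℕ) (hL : b L ≠ 0) (hL0 : ∀ k, k < L → b k = 0)
    (f : ℝ → ℝ) (hf : f = (fun ξ => Int.fract ξ) ∨ f = (fun ξ => Int.fract (-ξ)))
    (hfn : f ((n : ℝ) * α) = distNearInt ((n : ℝ) * α)) :
    ∀ x : ℤ, (n : ℤ) - (cfQ α L : ℤ) < x → x < (n : ℤ) + (cfQ α L : ℤ) →
      f ((n : ℝ) * α) ≤ f ((x : ℝ) * α) := by
  obtain ⟨-, hdigit, -, N, hbN, hsum⟩ := hb
  intro x hx₁ hx₂
  rcases eq_or_ne x n with rfl | hxn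
  · simp
  obtain ⟨l, rfl⟩ : ∃ l, L = l + 1 :=
    Nat.exists_eq_succ_of_ne_zero fun h => by subst h; simp only [cfQ] at hx₁ hx₂; omega
  have hLN : l + 1 ≤ N := by
    by_contra h
    exact hL (hbN _ (by omega))
  have hqn : cfQ α (l + 1) ≤ n := hsum ▸ (Nat.le_mul_of_pos_left _ (Nat.pos_of_ne_zero hL)).trans
    (single_le_sum (f := fun k => b k * cfQ α k) (fun _ _ => Nat.zero_le _) (mem_range.2 (by omega)))
  have hfn_le : f (n * α) ≤ cfProd α l := by
    rw [hfn, hsum, natCast_sum_mul_cfQ_mul, distNearInt_add_intCast]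
    exact (distNearInt_le_abs _).trans
      (abs_sum_range_mul_cfErr_le hα hirr b l (N + 1) (by omega) hL0 hdigit)
  have hxα : Irrational (x * α) := hirr.intCast_mul (by omega)
  rcases hf with rfl | rfl
  · exact fract_le_fract_of_sub_eq_mul hα hirr l (m := n - x) (by omega)
      (abs_lt.2 ⟨by omega, by omega⟩) (by push_cast; ring) hxα.fract_pos hfn_le
  · exact fract_le_fract_of_sub_eq_mul hα hirr l (m := x - n) (by omega)
      (abs_lt.2 ⟨by omega, by omega⟩) (by push_cast; ring) hxα.neg.fract_pos hfn_le

theorem stmt16 (α : ℝ) (hα : α ∈ Set.Ioo (0:ℝ) 1) (hirr : Irrational α)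
    (n : ℕ) (hn : 1 ≤ n) (b : ℕ → ℕ) (hb : OstrowskiRep α n b)
    (L : ℕ) (hL : b L ≠ 0) (hL0 : ∀ k, k < L → b k = 0)
    (f : ℝ → ℝ) (hf : f = (fun ξ => Int.fract ξ) ∨ f = (fun ξ => Int.fract (-ξ)))
    (hfn : f ((n : ℝ) * α) = distNearInt ((n : ℝ) * α)) :
    ∀ x : ℤ, (n : ℤ) - (cfQ α L : ℤ) < x → x < (n : ℤ) + (cfQ α L : ℤ) →
      f ((n : ℝ) * α) ≤ f ((x : ℝ) * α) :=
  stmt16_general α hα hirr n b hb L hL hL0 f hf hfn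
end
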